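/- If π is a non-crossing partition of [2n+1] into exactly n+1 blocks with no block containing two consecutive integers, then there is no way to extend π to a non-crossing partition of [2n+2] with no block containing two consecutive integers by adding 2n+2 to an existing block of π; the only extension is to add {2n+2} as a singleton block. -/

import Mathlib

open scoped Classical

def SameBlock {m : ℕ} (P : Finpartition (Finset.Icc 1 m)) (a b : ℕ) : Prop :=
  ∃ B ∈ P.parts, a ∈ B ∧ b ∈ B

def NonCrossing {m : ℕ} (P : Finpartition (Finset.Icc 1 m)) : Prop :=
  ∀ a b c d : ℕ, a < b → b < c → c < d → SameBlock P a c → SameBlock P b d →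
    SameBlock P a b

def NoConsec {m : ℕ} (P : Finpartition (Finset.Icc 1 m)) : Prop :=
  ∀ i : ℕ, ¬ SameBlock P i (i + 1)

def SpecialPartition (n : ℕ) (P : Finpartition (Finset.Icc 1 (2 * n + 1))) : Prop :=
  NonCrossing P ∧ NoConsec P ∧ P.parts.card = n + 1

def InS (n : ℕ) (s : ℕ → ℕ) : Prop :=
  (∀ i, 1 ≤ i → i ≤ n → 1 ≤ s i ∧ s i ≤ i) ∧
  (∀ i j r, 1 ≤ i → i ≤ n → s i = j → 1 ≤ r → r ≤ j - 1 → s (i - r) ≤ j - r)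

noncomputable def gap {m : ℕ} (P : Finpartition (Finset.Icc 1 m)) (i : ℕ) : ℕ :=
  sInf {b | i < b ∧ SameBlock P i b} - i

noncomputable def aSeq (n : ℕ) (P : Finpartition (Finset.Icc 1 (2 * n + 1)))
    (j : ℕ) : ℕ :=
  ((((Finset.Icc 1 (2 * n + 1)).filter (fun i => gap P i ≠ 0)).sort (· ≤ ·)).getD
    (n - j) 0) / 2


/-!
In a non-crossing partition of `[m]` with no block containing two consecutive integers, send
each element `i` that is not the maximum of its block to `j - 1`, where `j` is the next element
of the block of `i`. Non-crossing forces `j - 1` to be the maximum of its own block, and `i` is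
recovered from `j`, so this is an injection from the non-maxima into the block maxima other
than `m`; hence `m + 1 ≤ 2 · #blocks`. If `2n + 2` joined the block of some `x ≤ 2n + 1`, the
largest such `x` would be one more block maximum of `π` missed by the injection, so
`2n + 3 ≤ 2 (n + 1)`, which is absurd.
-/

open Finset

section

variable {m : ℕ} (P : Finpartition (Icc 1 m))

lemma sameBlock_comm {a b : ℕ} : SameBlock P a b ↔ SameBlock P b a :=
  exists_congr fun _ => and_congr_right fun _ => and_comm

lemma sameBlock_iff_mem_part {a b : ℕ} : SameBlock P a b ↔ b ∈ P.part a := by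
  rw [Finpartition.mem_part_iff_exists]
  exact exists_congr fun _ => and_congr_right fun _ => and_comm

def blockMaxima : Finset ℕ := {i ∈ Icc 1 m | ∀ j ∈ P.part i, j ≤ i}

lemma card_blockMaxima : #(blockMaxima P) = #P.parts := by
  refine card_bij (fun i _ => P.part i) (fun i hi => P.part_mem.2 (mem_filter.1 hi).1) ?_ ?_
  · intro i hi j hj hij
    have hi' := mem_filter.1 hi
    have hj' := mem_filter.1 hj
    refine le_antisymm (hj'.2 i ?_) (hi'.2 j ?_)
    · exact hij ▸ P.mem_part_self.2 hi'.1
    · exact hij ▸ P.mem_part_self.2 hj'.1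
  · intro B hB
    have hne := P.nonempty_of_mem_parts hB
    have hpart : P.part (B.max' hne) = B := P.part_eq_of_mem hB (B.max'_mem hne)
    refine ⟨B.max' hne, mem_filter.2 ⟨P.le hB (B.max'_mem hne), ?_⟩, hpart⟩
    rw [hpart]
    exact fun j hj => B.le_max' j hj

lemma mem_blockMaxima_self (hm : 1 ≤ m) : m ∈ blockMaxima P :=
  mem_filter.2 ⟨mem_Icc.2 ⟨hm, le_rfl⟩, fun _ hj => (mem_Icc.1 (P.part_subset _ hj)).2⟩

noncomputable def nextInBlock (i : ℕ) : ℕ := sInf {j | i < j ∧ j ∈ P.part i}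

variable {P}

lemma nextInBlock_le_of_mem {i j : ℕ} (hij : i < j) (hj : j ∈ P.part i) :
    nextInBlock P i ≤ j :=
  Nat.sInf_le ⟨hij, hj⟩

lemma nextInBlock_mem {i : ℕ} (hi : i ∈ Icc 1 m \ blockMaxima P) :
    i < nextInBlock P i ∧ nextInBlock P i ∈ P.part i := by
  obtain ⟨hi, hmax⟩ := mem_sdiff.1 hi
  simp only [blockMaxima, mem_filter, hi, true_and, not_forall, not_le] at hmax
  obtain ⟨j, hj, hij⟩ := hmax
  exact Nat.sInf_mem (s := {j | i < j ∧ j ∈ P.part i}) ⟨j, hij, hj⟩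

lemma nextInBlock_le {i : ℕ} (hi : i ∈ Icc 1 m \ blockMaxima P) : nextInBlock P i ≤ m :=
  (mem_Icc.1 (P.part_subset i (nextInBlock_mem hi).2)).2

lemma succ_lt_nextInBlock (hcons : NoConsec P) {i : ℕ} (hi : i ∈ Icc 1 m \ blockMaxima P) :
    i + 1 < nextInBlock P i := by
  obtain ⟨hlt, hmem⟩ := nextInBlock_mem hi
  refine lt_of_le_of_ne hlt fun heq => hcons i ?_
  rw [sameBlock_iff_mem_part, heq]
  exact hmem

lemma part_nextInBlock {i : ℕ} (hi : i ∈ Icc 1 m \ blockMaxima P) :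
    P.part (nextInBlock P i) = P.part i :=
  P.part_eq_of_mem (P.part_mem.2 (mem_sdiff.1 hi).1) (nextInBlock_mem hi).2

lemma nextInBlock_sub_one_mem_blockMaxima (hnc : NonCrossing P) (hcons : NoConsec P) {i : ℕ}
    (hi : i ∈ Icc 1 m \ blockMaxima P) : nextInBlock P i - 1 ∈ blockMaxima P := by
  obtain ⟨hlt, hmem⟩ := nextInBlock_mem hi
  have hsucc := succ_lt_nextInBlock hcons hi
  have hle := nextInBlock_le hi
  have hi1 := (mem_Icc.1 (mem_sdiff.1 hi).1).1
  refine mem_filter.2 ⟨mem_Icc.2 ⟨by omega, by omega⟩, fun j hj => ?_⟩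
  by_contra! hgt
  rcases (show j = nextInBlock P i ∨ nextInBlock P i < j by omega) with rfl | hj'
  · refine hcons (nextInBlock P i - 1) ?_
    rw [Nat.sub_add_cancel (by omega), sameBlock_iff_mem_part]
    exact hj
  · have hcross : SameBlock P i (nextInBlock P i - 1) :=
      hnc _ _ _ j (by omega) (by omega) hj' ((sameBlock_iff_mem_part P).2 hmem)
        ((sameBlock_iff_mem_part P).2 hj)
    have := nextInBlock_le_of_mem (by omega) ((sameBlock_iff_mem_part P).1 hcross)
    omega

lemma le_of_nextInBlock_eq {i i' : ℕ} (hi : i ∈ Icc 1 m \ blockMaxima P)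
    (hi' : i' ∈ Icc 1 m \ blockMaxima P) (heq : nextInBlock P i = nextInBlock P i') :
    i ≤ i' := by
  by_contra! hlt
  have hmem : i ∈ P.part i' := by
    rw [← part_nextInBlock hi', ← heq, part_nextInBlock hi]
    exact P.mem_part_self.2 (mem_sdiff.1 hi).1
  have := nextInBlock_le_of_mem hlt hmem
  have := (nextInBlock_mem hi).1
  omega

lemma injOn_nextInBlock_sub_one :
    Set.InjOn (fun i => nextInBlock P i - 1) ↑(Icc 1 m \ blockMaxima P) := by
  intro i hi i' hi' h
  have heq : nextInBlock P i = nextInBlock P i' := by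
    have := (nextInBlock_mem (mem_coe.1 hi)).1
    have := (nextInBlock_mem (mem_coe.1 hi')).1
    simp only at h
    omega
  exact le_antisymm (le_of_nextInBlock_eq hi hi' heq) (le_of_nextInBlock_eq hi' hi heq.symm)

lemma add_card_le_two_mul_card_parts (hnc : NonCrossing P) (hcons : NoConsec P)
    {E : Finset ℕ} (hE : E ⊆ blockMaxima P)
    (hdisj : ∀ i ∈ Icc 1 m \ blockMaxima P, nextInBlock P i - 1 ∉ E) :
    m + #E ≤ 2 * #P.parts := by
  have hinj : #(Icc 1 m \ blockMaxima P) ≤ #(blockMaxima P \ E) :=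
    card_le_card_of_injOn _
      (fun i hi => mem_sdiff.2 ⟨nextInBlock_sub_one_mem_blockMaxima hnc hcons hi, hdisj i hi⟩)
      injOn_nextInBlock_sub_one
  have hsplit : #(Icc 1 m \ blockMaxima P) + #(blockMaxima P) = m := by
    have hsub : blockMaxima P ⊆ Icc 1 m := filter_subset _ _
    rw [card_sdiff_add_card_eq_card hsub, Nat.card_Icc, Nat.add_sub_cancel]
  have hE' : #(blockMaxima P \ E) = #(blockMaxima P) - #E := card_sdiff_of_subset hE
  have := card_le_card hE
  rw [card_blockMaxima] at hsplit hE' this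
  omega

end

section

variable {m : ℕ} {P : Finpartition (Icc 1 m)} {Q : Finpartition (Icc 1 (m + 1))}
  (hrestrict : ∀ x y : ℕ, 1 ≤ x → x ≤ m → 1 ≤ y → y ≤ m →
    (SameBlock Q x y ↔ SameBlock P x y))
include hrestrict

lemma exists_mem_blockMaxima_of_sameBlock (hQcons : NoConsec Q) {x : ℕ} (hx : x ∈ Icc 1 m)
    (hxQ : SameBlock Q x (m + 1)) :
    ∃ y ∈ blockMaxima P, y ≠ m ∧ SameBlock Q y (m + 1) := by
  set B := Q.part (m + 1)
  have hxB : x ∈ B.erase (m + 1) :=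
    mem_erase.2 ⟨by grind, (sameBlock_iff_mem_part Q).1 ((sameBlock_comm Q).1 hxQ)⟩
  obtain ⟨y, hyS, hyle⟩ : ∃ y ∈ B.erase (m + 1), ∀ j ∈ B.erase (m + 1), j ≤ y :=
    ⟨_, max'_mem _ ⟨x, hxB⟩, fun j hj => le_max' _ j hj⟩
  obtain ⟨hym1, hyB⟩ := mem_erase.1 hyS
  have hy := mem_Icc.1 (Q.part_subset _ hyB)
  have hyQ : SameBlock Q y (m + 1) := (sameBlock_comm Q).1 ((sameBlock_iff_mem_part Q).2 hyB)
  refine ⟨y, mem_filter.2 ⟨mem_Icc.2 ⟨hy.1, by omega⟩, fun j hj => ?_⟩, ?_, hyQ⟩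
  · have hjm := mem_Icc.1 (P.part_subset _ hj)
    have hyjQ : SameBlock Q y j :=
      (hrestrict y j hy.1 (by omega) hjm.1 hjm.2).2 ((sameBlock_iff_mem_part P).2 hj)
    rw [sameBlock_iff_mem_part, Q.part_eq_of_mem (Q.part_mem.2 (by simp)) hyB] at hyjQ
    exact hyle j (mem_erase.2 ⟨by omega, hyjQ⟩)
  · rintro rfl
    exact hQcons y hyQ

lemma nextInBlock_sub_one_ne_of_sameBlock (hPcons : NoConsec P) (hQnc : NonCrossing Q)
    {y : ℕ} (hy : y ∈ Icc 1 m) (hyQ : SameBlock Q y (m + 1)) {i : ℕ}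
    (hi : i ∈ Icc 1 m \ blockMaxima P) : nextInBlock P i - 1 ≠ y := by
  intro hnext
  have hlt := succ_lt_nextInBlock hPcons hi
  have hle := nextInBlock_le hi
  have hi1 := (mem_Icc.1 (mem_sdiff.1 hi).1).1
  have hsucc : nextInBlock P i = y + 1 := by omega
  have hiyQ : SameBlock Q i (y + 1) := (hrestrict i (y + 1) hi1 (by omega) (by omega)
    (by omega)).2 (hsucc ▸ (sameBlock_iff_mem_part P).2 (nextInBlock_mem hi).2)
  -- the pairs `i, y + 1` and `y, m + 1` interleave in `Q`
  have hiy := (hrestrict i y hi1 (by omega) (mem_Icc.1 hy).1 (mem_Icc.1 hy).2).1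
    (hQnc i y (y + 1) (m + 1) (by omega) (by omega) (by omega) hiyQ hyQ)
  have := nextInBlock_le_of_mem (by omega) ((sameBlock_iff_mem_part P).1 hiy)
  omega

lemma add_two_le_two_mul_card_parts_of_sameBlock (hPnc : NonCrossing P) (hPcons : NoConsec P)
    (hQnc : NonCrossing Q) (hQcons : NoConsec Q) {x : ℕ} (hx : x ∈ Icc 1 m)
    (hxQ : SameBlock Q x (m + 1)) :
    m + 2 ≤ 2 * #P.parts := by
  obtain ⟨y, hymax, hym, hyQ⟩ := exists_mem_blockMaxima_of_sameBlock hrestrict hQcons hx hxQ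
  have hE : {y, m} ⊆ blockMaxima P :=
    insert_subset hymax (singleton_subset_iff.2 (mem_blockMaxima_self P (by grind)))
  have hdisj (i : ℕ) (hi : i ∈ Icc 1 m \ blockMaxima P) :
      nextInBlock P i - 1 ∉ ({y, m} : Finset ℕ) := by
    have := nextInBlock_le hi
    have := (nextInBlock_mem hi).1
    simp only [mem_insert, mem_singleton, not_or]
    exact ⟨nextInBlock_sub_one_ne_of_sameBlock hrestrict hPcons hQnc
      (filter_subset _ _ hymax) hyQ hi, by omega⟩
  have := add_card_le_two_mul_card_parts hPnc hPcons hE hdisj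
  rw [card_pair hym] at this
  omega

end

lemma singleton_mem_parts_of_forall_not_sameBlock {m : ℕ} (Q : Finpartition (Icc 1 (m + 1)))
    (h : ∀ x : ℕ, 1 ≤ x → x ≤ m → ¬ SameBlock Q x (m + 1)) : {m + 1} ∈ Q.parts := by
  have hm : m + 1 ∈ Icc 1 (m + 1) := by simp
  have hpart : Q.part (m + 1) = {m + 1} := by
    refine eq_singleton_iff_unique_mem.2 ⟨Q.mem_part_self.2 hm, fun y hy => ?_⟩
    have := mem_Icc.1 (Q.part_subset _ hy)
    by_contra hne
    exact h y this.1 (by omega) ((sameBlock_comm Q).1 ((sameBlock_iff_mem_part Q).2 hy))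
  exact hpart ▸ Q.part_mem.2 hm

theorem stmt7 (n : ℕ) (P : Finpartition (Finset.Icc 1 (2 * n + 1)))
    (h : SpecialPartition n P)
    (Q : Finpartition (Finset.Icc 1 (2 * n + 2)))
    (hQnc : NonCrossing Q) (hQcons : NoConsec Q)
    (hrestrict : ∀ x y : ℕ, 1 ≤ x → x ≤ 2 * n + 1 → 1 ≤ y → y ≤ 2 * n + 1 →
      (SameBlock Q x y ↔ SameBlock P x y)) :
    (∀ x : ℕ, 1 ≤ x → x ≤ 2 * n + 1 → ¬ SameBlock Q x (2 * n + 2)) ∧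
    ({2 * n + 2} : Finset ℕ) ∈ Q.parts := by
  obtain ⟨hPnc, hPcons, hPcard⟩ := h
  have hfree : ∀ x : ℕ, 1 ≤ x → x ≤ 2 * n + 1 → ¬ SameBlock Q x (2 * n + 2) := by
    intro x hx1 hx2 hxQ
    have := add_two_le_two_mul_card_parts_of_sameBlock hrestrict hPnc hPcons hQnc hQcons
      (mem_Icc.2 ⟨hx1, hx2⟩) hxQ
    omega
  exact ⟨hfree, singleton_mem_parts_of_forall_not_sameBlock Q hfree⟩
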